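/- arXiv:2207.06806 — 2 statements merged into one kernel-verified Lean document; each statement's English description precedes it below -/
import Mathlib

section
/- For g_i = [[R_i, r_i],[0, 1]] and g_j = [[R_j, r_j],[0, 1]] in SE(2), one has g_i⁻¹ g_j = [[R_iᵀR_j, -R_iᵀ(r_i - r_j)],[0, 1]] and ‖Ad_{g_i⁻¹ g_j}(1, 0)‖² = 2 + |r_j - r_i|²; consequently |r_i - r_j| = sqrt(‖Ad_{g_i⁻¹ g_j}(1, 0)‖² - 2). -/
/-!
The product `g_i⁻¹ g_j` is `SE2 Q b` with `Q = R_iᵀ R_j` orthogonal and `b = -R_iᵀ (r_i - r_j)`.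
Since `Q J Qᵀ = (det Q) J` for orthogonal `Q`, conjugation gives
`Ad_{(Q, b)} (a, c) = (a det Q, Q c + a det Q • J b)`, where `J b = ![b 1, -b 0]`. As `(det Q)² = 1`
and `J`, `R_iᵀ` are isometries, `‖Ad_{g_i⁻¹ g_j} (1, 0)‖² = 2 + |J b|² = 2 + |b|² = 2 + |r_i - r_j|²`.
-/
open Matrix

noncomputable section

/-- The SE(2) matrix `[[R, r],[0, 1]]`. -/
def SE2 (R : Matrix (Fin 2) (Fin 2) ℝ) (r : Fin 2 → ℝ) : Matrix (Fin 3) (Fin 3) ℝ :=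
  !![R 0 0, R 0 1, r 0; R 1 0, R 1 1, r 1; 0, 0, 1]

/-- The se(2) matrix `[[-aJ, b],[0, 0]]` with `J = [[0,1],[-1,0]]`, denoted `(a, b)`. -/
def se2 (a : ℝ) (b : Fin 2 → ℝ) : Matrix (Fin 3) (Fin 3) ℝ :=
  !![0, -a, b 0; a, 0, b 1; 0, 0, 0]

/-- The squared norm `‖ξ‖² = tr(ξᵀξ)` on se(2). -/
def normSq (ξ : Matrix (Fin 3) (Fin 3) ℝ) : ℝ := (ξᵀ * ξ).trace

section Orthogonal

variable {n 𝕜 : Type*} [Fintype n] [DecidableEq n] [CommRing 𝕜]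

theorem transpose_mul_self_of_orthogonal {R S : Matrix n n 𝕜}
    (hR : Rᵀ * R = 1) (hS : Sᵀ * S = 1) : (Rᵀ * S)ᵀ * (Rᵀ * S) = 1 := by
  rw [transpose_mul, transpose_transpose, Matrix.mul_assoc, ← Matrix.mul_assoc R,
    mul_eq_one_comm.mp hR, Matrix.one_mul, hS]

theorem mulVec_dotProduct_mulVec_self {R : Matrix n n 𝕜} (hR : Rᵀ * R = 1) (v : n → 𝕜) :
    (R *ᵥ v) ⬝ᵥ (R *ᵥ v) = v ⬝ᵥ v := by
  rw [dotProduct_mulVec, ← vecMul_transpose, vecMul_vecMul, hR, vecMul_one]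

theorem det_sq_of_orthogonal {R : Matrix n n 𝕜} (hR : Rᵀ * R = 1) : R.det ^ 2 = 1 := by
  simpa [sq] using congrArg det hR

end Orthogonal

theorem perp_dotProduct_perp (b : Fin 2 → ℝ) : ![b 1, -b 0] ⬝ᵥ ![b 1, -b 0] = b ⬝ᵥ b := by
  simp only [dotProduct, Fin.sum_univ_two, cons_val_zero, cons_val_one, cons_val_fin_one]
  ring

theorem SE2_mul (R S : Matrix (Fin 2) (Fin 2) ℝ) (r s : Fin 2 → ℝ) :
    SE2 R r * SE2 S s = SE2 (R * S) (R *ᵥ s + r) := by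
  ext i j
  fin_cases i <;> fin_cases j <;> simp [SE2, mul_apply, Fin.sum_univ_three, Fin.sum_univ_two]

theorem SE2_one : SE2 1 0 = 1 := by
  ext i j
  fin_cases i <;> fin_cases j <;> simp [SE2, one_apply]

theorem SE2_inv {R : Matrix (Fin 2) (Fin 2) ℝ} (hR : Rᵀ * R = 1) (r : Fin 2 → ℝ) :
    (SE2 R r)⁻¹ = SE2 Rᵀ (-(Rᵀ *ᵥ r)) := by
  have hR' : R * Rᵀ = 1 := mul_eq_one_comm.mp hR
  refine inv_eq_right_inv ?_
  rw [SE2_mul, hR', mulVec_neg, mulVec_mulVec, hR', one_mulVec, neg_add_cancel, SE2_one]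

theorem SE2_inv_mul {R : Matrix (Fin 2) (Fin 2) ℝ} (hR : Rᵀ * R = 1)
    (S : Matrix (Fin 2) (Fin 2) ℝ) (r s : Fin 2 → ℝ) :
    (SE2 R r)⁻¹ * SE2 S s = SE2 (Rᵀ * S) (-(Rᵀ *ᵥ (r - s))) := by
  rw [SE2_inv hR, SE2_mul, mulVec_sub]
  congr 1
  abel

theorem SE2_mul_se2_mul_inv {Q : Matrix (Fin 2) (Fin 2) ℝ} (hQ : Qᵀ * Q = 1)
    (b : Fin 2 → ℝ) (a : ℝ) (c : Fin 2 → ℝ) :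
    SE2 Q b * se2 a c * (SE2 Q b)⁻¹ = se2 (a * Q.det) (Q *ᵥ c + (a * Q.det) • ![b 1, -b 0]) := by
  rw [SE2_inv hQ, det_fin_two]
  ext i j
  fin_cases i <;> fin_cases j <;> simp [SE2, se2, mul_apply, Fin.sum_univ_three] <;> ring

theorem normSq_se2 (a : ℝ) (b : Fin 2 → ℝ) : normSq (se2 a b) = 2 * a ^ 2 + b ⬝ᵥ b := by
  simp only [normSq, se2, trace, diag_apply, mul_apply, transpose_apply, of_apply, dotProduct,
    Fin.sum_univ_three, Fin.sum_univ_two, cons_val', cons_val_fin_one, cons_val_zero, cons_val_one,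
    cons_val]
  ring

theorem relative_distance_via_adjoint_general (Ri Rj : Matrix (Fin 2) (Fin 2) ℝ)
    (ri rj : Fin 2 → ℝ) (hRi : Riᵀ * Ri = 1) (hRj : Rjᵀ * Rj = 1) :
    (SE2 Ri ri)⁻¹ * SE2 Rj rj = SE2 (Riᵀ * Rj) (-(Riᵀ *ᵥ (ri - rj))) ∧
    normSq ((SE2 Ri ri)⁻¹ * SE2 Rj rj * se2 1 0 * ((SE2 Ri ri)⁻¹ * SE2 Rj rj)⁻¹) =
      2 + ((rj 0 - ri 0) ^ 2 + (rj 1 - ri 1) ^ 2) ∧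
    Real.sqrt ((ri 0 - rj 0) ^ 2 + (ri 1 - rj 1) ^ 2) =
      Real.sqrt
        (normSq ((SE2 Ri ri)⁻¹ * SE2 Rj rj * se2 1 0 * ((SE2 Ri ri)⁻¹ * SE2 Rj rj)⁻¹) - 2) := by
  have hg := SE2_inv_mul hRi Rj ri rj
  have hQ : (Riᵀ * Rj)ᵀ * (Riᵀ * Rj) = 1 := transpose_mul_self_of_orthogonal hRi hRj
  have hRiT : Riᵀᵀ * Riᵀ = 1 := by rw [transpose_transpose, mul_eq_one_comm, hRi]
  have hnorm :
      normSq ((SE2 Ri ri)⁻¹ * SE2 Rj rj * se2 1 0 * ((SE2 Ri ri)⁻¹ * SE2 Rj rj)⁻¹) =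
        2 + (ri - rj) ⬝ᵥ (ri - rj) := by
    rw [hg, SE2_mul_se2_mul_inv hQ, one_mul, mulVec_zero, zero_add, normSq_se2, smul_dotProduct,
      dotProduct_smul, perp_dotProduct_perp, neg_dotProduct_neg, mulVec_dotProduct_mulVec_self hRiT,
      smul_eq_mul, smul_eq_mul]
    linear_combination (2 + (ri - rj) ⬝ᵥ (ri - rj)) * det_sq_of_orthogonal hQ
  have hsq : (ri - rj) ⬝ᵥ (ri - rj) = (rj 0 - ri 0) ^ 2 + (rj 1 - ri 1) ^ 2 := by
    simp only [dotProduct, Pi.sub_apply, Fin.sum_univ_two]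
    ring
  refine ⟨hg, by rw [hnorm, hsq], ?_⟩
  rw [hnorm, hsq, add_sub_cancel_left]
  congr 1
  ring

/-- `g_i⁻¹ g_j = [[R_iᵀR_j, -R_iᵀ(r_i - r_j)],[0,1]]`,
`‖Ad_{g_i⁻¹ g_j}(1,0)‖² = 2 + |r_j - r_i|²`, and consequently
`|r_i - r_j| = sqrt(‖Ad_{g_i⁻¹ g_j}(1,0)‖² - 2)`. -/
theorem relative_distance_via_adjoint (Ri Rj : Matrix (Fin 2) (Fin 2) ℝ)
    (ri rj : Fin 2 → ℝ) (hRi : Riᵀ * Ri = 1) (hdeti : Ri.det = 1)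
    (hRj : Rjᵀ * Rj = 1) (hdetj : Rj.det = 1) :
    (SE2 Ri ri)⁻¹ * SE2 Rj rj = SE2 (Riᵀ * Rj) (-(Riᵀ *ᵥ (ri - rj))) ∧
    normSq ((SE2 Ri ri)⁻¹ * SE2 Rj rj * se2 1 0 * ((SE2 Ri ri)⁻¹ * SE2 Rj rj)⁻¹) =
      2 + ((rj 0 - ri 0) ^ 2 + (rj 1 - ri 1) ^ 2) ∧
    Real.sqrt ((ri 0 - rj 0) ^ 2 + (ri 1 - rj 1) ^ 2) =
      Real.sqrt
        (normSq ((SE2 Ri ri)⁻¹ * SE2 Rj rj * se2 1 0 * ((SE2 Ri ri)⁻¹ * SE2 Rj rj)⁻¹) - 2) :=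
  relative_distance_via_adjoint_general Ri Rj ri rj hRi hRj
end
end

section
/- Let v = v¹e₁ + v²e₂ + v³e₃ ∈ se(2) and define the linear map D : se(2) → Matrix(3, 3, ℝ) by D(η) = (I - v/2) η (I + v/2), where I is the 3×3 identity matrix. Then D maps se(2) into se(2), and in the basis (e₁, e₂, e₃) it acts by D(e₁) = (1 + (v¹)²/4) e₁ + (v¹v²/4 - v³/2) e₂ + (v¹v³/4 + v²/2) e₃, D(e₂) = e₂ - (v¹/2) e₃, and D(e₃) = (v¹/2) e₂ + e₃; i.e., the matrix of the inverse right-trivialized tangent of the Cayley map on se(2) is [[1 + (v¹)²/4, 0, 0],[v¹v²/4 - v³/2, 1, v¹/2],[v¹v³/4 + v²/2, -v¹/2, 1]]. -/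
open Matrix

noncomputable section

/-- The basis element `e₁ = [[0,-1,0],[1,0,0],[0,0,0]]` of se(2). -/
def e1 : Matrix (Fin 3) (Fin 3) ℝ := !![0, -1, 0; 1, 0, 0; 0, 0, 0]

/-- The basis element `e₂ = [[0,0,1],[0,0,0],[0,0,0]]` of se(2). -/
def e2 : Matrix (Fin 3) (Fin 3) ℝ := !![0, 0, 1; 0, 0, 0; 0, 0, 0]

/-- The basis element `e₃ = [[0,0,0],[0,0,1],[0,0,0]]` of se(2). -/
def e3 : Matrix (Fin 3) (Fin 3) ℝ := !![0, 0, 0; 0, 0, 1; 0, 0, 0]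

/-- The inverse right-trivialized tangent of the Cayley map,
`dcay_v⁻¹(η) = (I - v/2) η (I + v/2)`. -/
def dcayInv (v η : Matrix (Fin 3) (Fin 3) ℝ) : Matrix (Fin 3) (Fin 3) ℝ :=
  (1 - (1 / 2 : ℝ) • v) * η * (1 + (1 / 2 : ℝ) • v)

/-! Every `a e₁ + b e₂ + c e₃` is the explicit matrix `[[0, -a, b], [a, 0, c], [0, 0, 0]]`, so
`(I - v/2) η (I + v/2)` can be multiplied out for a general `η ∈ se(2)`. The product is again of
this form, with coordinates linear in `(a, b, c)`: this gives the invariance of se(2) and, at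
`(a, b, c) = (1, 0, 0), (0, 1, 0), (0, 0, 1)`, the columns of the matrix of `D`. -/

theorem smul_e1_add_smul_e2_add_smul_e3 (a b c : ℝ) :
    a • e1 + b • e2 + c • e3 = !![0, -a, b; a, 0, c; 0, 0, 0] := by
  ext i j; fin_cases i <;> fin_cases j <;> simp [e1, e2, e3]

theorem dcayInv_smul_e1_add_smul_e2_add_smul_e3 (v1 v2 v3 a b c : ℝ) :
    dcayInv (v1 • e1 + v2 • e2 + v3 • e3) (a • e1 + b • e2 + c • e3) =
      (a * (1 + v1 ^ 2 / 4)) • e1 + (a * (v1 * v2 / 4 - v3 / 2) + b + c * (v1 / 2)) • e2 +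
        (a * (v1 * v3 / 4 + v2 / 2) - b * (v1 / 2) + c) • e3 := by
  simp only [smul_e1_add_smul_e2_add_smul_e3, dcayInv, Matrix.one_fin_three, Matrix.smul_of,
    Matrix.of_add_of, Matrix.of_sub_of]
  ext i j; fin_cases i <;> fin_cases j <;> simp <;> ring

/-- For `v = v¹e₁ + v²e₂ + v³e₃ ∈ se(2)`, the map `D(η) = (I - v/2)η(I + v/2)` maps se(2)
into se(2) and, in the basis `(e₁, e₂, e₃)`, acts by the matrix
`[[1 + (v¹)²/4, 0, 0],[v¹v²/4 - v³/2, 1, v¹/2],[v¹v³/4 + v²/2, -v¹/2, 1]]`. -/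
theorem dcayInv_se2 (v1 v2 v3 : ℝ) :
    (∀ η ∈ Submodule.span ℝ ({e1, e2, e3} : Set (Matrix (Fin 3) (Fin 3) ℝ)),
      dcayInv (v1 • e1 + v2 • e2 + v3 • e3) η ∈
        Submodule.span ℝ ({e1, e2, e3} : Set (Matrix (Fin 3) (Fin 3) ℝ))) ∧
    dcayInv (v1 • e1 + v2 • e2 + v3 • e3) e1 =
      (1 + v1 ^ 2 / 4) • e1 + (v1 * v2 / 4 - v3 / 2) • e2 + (v1 * v3 / 4 + v2 / 2) • e3 ∧
    dcayInv (v1 • e1 + v2 • e2 + v3 • e3) e2 = e2 - (v1 / 2) • e3 ∧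
    dcayInv (v1 • e1 + v2 • e2 + v3 • e3) e3 = (v1 / 2) • e2 + e3 := by
  have hD := dcayInv_smul_e1_add_smul_e2_add_smul_e3 v1 v2 v3
  refine ⟨?_, ?_, ?_, ?_⟩
  · intro η hη
    obtain ⟨a, b, c, rfl⟩ := Submodule.mem_span_triple.mp hη
    rw [hD]
    exact Submodule.mem_span_triple.mpr ⟨_, _, _, rfl⟩
  · convert hD 1 0 0 using 2 <;> module
  · convert hD 0 1 0 using 2 <;> module
  · convert hD 0 0 1 using 2 <;> module
end
end
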